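/- arXiv:1905.05231 — 7 statements merged into one kernel-verified Lean document; each statement's English description precedes it below -/
import Mathlib

section
/- Let D be a distribution over item values and suppose selling each singleton exclusively at price t yields revenue at most S (i.e., SRev*(D) ≤ S) with S < t. Then the sum over all items i of Pr[v_i ≥ t] is at most (S/t)/(1 - S/t). -/
open MeasureTheory

lemma aux_prod_mul_one_add_sum_le {ι : Type*} [DecidableEq ι] (s : Finset ι) (q : ι → ℝ)
    (h0 : ∀ i ∈ s, 0 ≤ q i) (h1 : ∀ i ∈ s, q i ≤ 1) :
    (∏ i ∈ s, q i) * (1 + ∑ i ∈ s, (1 - q i)) ≤ 1 := by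
  induction s using Finset.induction with
  | empty => simp
  | @insert a s ha ih =>
    have h0' : ∀ i ∈ s, 0 ≤ q i := fun i hi => h0 i (Finset.mem_insert_of_mem hi)
    have h1' : ∀ i ∈ s, q i ≤ 1 := fun i hi => h1 i (Finset.mem_insert_of_mem hi)
    have IH := ih h0' h1'
    have hQ0 : 0 ≤ ∏ i ∈ s, q i := Finset.prod_nonneg h0'
    have hQ1 : ∏ i ∈ s, q i ≤ 1 := Finset.prod_le_one h0' h1'
    have hT0 : 0 ≤ ∑ i ∈ s, (1 - q i) :=
      Finset.sum_nonneg fun i hi => by linarith [h1' i hi]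
    have ha0 : 0 ≤ q a := h0 a (Finset.mem_insert_self a s)
    have ha1 : q a ≤ 1 := h1 a (Finset.mem_insert_self a s)
    rw [Finset.prod_insert ha, Finset.sum_insert ha]
    nlinarith [sq_nonneg (1 - q a)]

/-- If selling each singleton exclusively at price `t` yields revenue at most `S`
(with `S < t`), then the sum over items of `Pr[v_i ≥ t]` is at most `(S/t)/(1 - S/t)`.
The buyer's values are independent, i.e. drawn from the product measure. -/
theorem stmt0 (n : ℕ) (μi : Fin n → Measure ℝ)
    [∀ i, IsProbabilityMeasure (μi i)]
    (t S : ℝ) (ht : 0 < t) (hS0 : 0 ≤ S) (hSt : S < t)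
    (hrev : t * ((Measure.pi μi) {v | ∃ i, t ≤ v i}).toReal ≤ S) :
    ∑ i, ((μi i) {x | t ≤ x}).toReal ≤ (S / t) / (1 - S / t) := by
  set E : Set (Fin n → ℝ) := {v | ∃ i, t ≤ v i} with hEdef
  have hE : E = ⋃ i, (fun v : Fin n → ℝ => v i) ⁻¹' Set.Ici t := by
    ext v; simp [hEdef, Set.mem_iUnion]
  have hEmeas : MeasurableSet E := by
    rw [hE]
    exact MeasurableSet.iUnion fun i => (measurable_pi_apply i) measurableSet_Ici
  have hcompl : Eᶜ = Set.pi Set.univ (fun _ => Set.Iio t) := by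
    ext v; simp [hEdef, not_le]
  have hμc : Measure.pi μi Eᶜ = ∏ i, μi i (Set.Iio t) := by
    rw [hcompl, Measure.pi_pi]
  have hXle : (∏ i, μi i (Set.Iio t)) ≤ 1 :=
    Finset.prod_le_one (fun i _ => bot_le) (fun i _ => prob_le_one)
  have hμE : Measure.pi μi E = 1 - ∏ i, μi i (Set.Iio t) := by
    have h := prob_compl_eq_one_sub (μ := Measure.pi μi) hEmeas.compl
    rw [compl_compl, hμc] at h
    exact h
  have htoReal : ((Measure.pi μi) E).toReal
      = 1 - ∏ i, (μi i (Set.Iio t)).toReal := by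
    rw [hμE, ENNReal.toReal_sub_of_le hXle ENNReal.one_ne_top, ENNReal.toReal_one,
      ENNReal.toReal_prod]
  set q : Fin n → ℝ := fun i => (μi i (Set.Iio t)).toReal with hq
  have hq0 : ∀ i ∈ Finset.univ, 0 ≤ q i := fun i _ => ENNReal.toReal_nonneg
  have hq1 : ∀ i ∈ Finset.univ, q i ≤ 1 := fun i _ => by
    simpa using ENNReal.toReal_mono ENNReal.one_ne_top
      (prob_le_one (μ := μi i) (s := Set.Iio t))
  have hpq : ∀ i, ((μi i) {x | t ≤ x}).toReal = 1 - q i := by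
    intro i
    have h := prob_compl_eq_one_sub (μ := μi i) (measurableSet_Iio (a := t))
    rw [Set.compl_Iio] at h
    have hle : μi i (Set.Iio t) ≤ 1 := prob_le_one
    have : ((μi i) (Set.Ici t)).toReal = 1 - q i := by
      rw [h, ENNReal.toReal_sub_of_le hle ENNReal.one_ne_top, ENNReal.toReal_one]
    simpa [Set.Ici] using this
  have key := aux_prod_mul_one_add_sum_le Finset.univ q hq0 hq1
  -- From hrev : t * (1 - ∏ q) ≤ S, deduce ∏ q ≥ 1 - S / t
  rw [htoReal] at hrev
  have hprodge : 1 - S / t ≤ ∏ i, q i := by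
    have : 1 - ∏ i, q i ≤ S / t := by
      rw [le_div_iff₀ ht]; linarith [hrev]
    linarith
  have hsum : ∑ i, ((μi i) {x | t ≤ x}).toReal = ∑ i, (1 - q i) := by
    exact Finset.sum_congr rfl fun i _ => hpq i
  rw [hsum]
  have hslt : S / t < 1 := (div_lt_one ht).mpr hSt
  have h1s : 0 < 1 - S / t := by linarith
  have hT0 : 0 ≤ ∑ i, (1 - q i) :=
    Finset.sum_nonneg fun i hi => by linarith [hq1 i hi]
  have h2 : (1 - S / t) * (1 + ∑ i, (1 - q i)) ≤ 1 := by
    calc (1 - S / t) * (1 + ∑ i, (1 - q i))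
        ≤ (∏ i, q i) * (1 + ∑ i, (1 - q i)) := by
          apply mul_le_mul_of_nonneg_right hprodge; linarith
      _ ≤ 1 := key
  rw [le_div_iff₀ h1s]
  nlinarith [h2]
end

section
/- Nudge-and-round with careful coupling: Let D, D' be coupled valuation distributions and M a menu. Let M' be the menu with the same allocations as M but all prices multiplied by (1-ε). Then the revenue of M' on D' is at least (1-ε) times the revenue of M on D, minus δ_M(D,D')/ε. -/
open scoped BigOperators

/-- A valuation: a set function on the `n` items. -/
abbrev Val (n : ℕ) := Finset (Fin n) → ℝ

/-- A randomized allocation: a distribution over sets of items. -/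
abbrev RandAlloc (n : ℕ) := PMF (Finset (Fin n))

/-- Expected value of a randomized allocation under valuation `v`. -/
noncomputable def vEval {n : ℕ} (v : Val n) (A : RandAlloc n) : ℝ :=
  ∑' S, (A S).toReal * v S

/-- `π` is a coupling of `D` and `D'` if it has the correct marginals. -/
def IsCoupling {α β : Type*} (π : PMF (α × β)) (D : PMF α) (D' : PMF β) : Prop :=
  π.map Prod.fst = D ∧ π.map Prod.snd = D'

/-- Expectation of `f` under a discrete distribution `π`. -/
noncomputable def Exp {α : Type*} (π : PMF α) (f : α → ℝ) : ℝ :=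
  ∑' a, (π a).toReal * f a

/-- A menu contains the free empty option and charges nonnegative prices. -/
def IsMenu {n : ℕ} (M : Set (RandAlloc n × ℝ)) : Prop :=
  (PMF.pure ∅, (0 : ℝ)) ∈ M ∧ ∀ o ∈ M, 0 ≤ o.2

/-- `c` is a utility-maximizing purchase rule for menu `M`: each buyer `v` buys an
option of `M` maximizing `v(S) - p` among options of `M`. -/
def IsOptChoice {n : ℕ} (M : Set (RandAlloc n × ℝ))
    (c : Val n → RandAlloc n × ℝ) : Prop :=
  (∀ v, c v ∈ M) ∧ ∀ v, ∀ o ∈ M, vEval v o.1 - o.2 ≤ vEval v (c v).1 - (c v).2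

/-- Expected revenue of purchase rule `c` on distribution `D`. -/
noncomputable def RevM {n : ℕ} (c : Val n → RandAlloc n × ℝ) (D : PMF (Val n)) : ℝ :=
  ∑' v, (D v).toReal * (c v).2

/-- The allocations appearing in a menu `M`. -/
def menuAllocs {n : ℕ} (M : Set (RandAlloc n × ℝ)) : Set (RandAlloc n) :=
  {A | ∃ p, (A, p) ∈ M}

/-- The menu-restricted error of a fixed coupling `π` with respect to menu `M`. -/
noncomputable def deltaMC {n : ℕ} (M : Set (RandAlloc n × ℝ))
    (π : PMF (Val n × Val n)) : ℝ :=
  sSup {x | ∃ f : Val n → RandAlloc n, (∀ v, f v ∈ menuAllocs M) ∧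
    x = Exp π fun p => vEval p.1 (f p.1) - vEval p.2 (f p.1)} +
  sSup {x | ∃ f : Val n → RandAlloc n, (∀ v, f v ∈ menuAllocs M) ∧
    x = Exp π fun p => vEval p.2 (f p.2) - vEval p.1 (f p.2)}

/-- The menu-restricted coupling error `δ_M(D, D')`: infimum over couplings. -/
noncomputable def deltaM {n : ℕ} (M : Set (RandAlloc n × ℝ))
    (D D' : PMF (Val n)) : ℝ :=
  sInf {x | ∃ π : PMF (Val n × Val n), IsCoupling π D D' ∧ x = deltaMC M π}

lemma Exp_eq_sum {α : Type*} (p : PMF α) (hp : p.support.Finite) (g : α → ℝ) :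
    Exp p g = ∑ a ∈ hp.toFinset, (p a).toReal * g a := by
  refine tsum_eq_sum ?_
  intro a ha
  have : p a = 0 := by
    by_contra h
    exact ha (hp.mem_toFinset.mpr (PMF.mem_support_iff p a |>.mpr h))
  simp [this]

lemma Exp_neg {α : Type*} (p : PMF α) (g : α → ℝ) :
    Exp p (fun a => -g a) = - Exp p g := by
  simp [Exp, mul_neg, tsum_neg]

lemma Exp_map {α β : Type*} (p : PMF α) (hp : p.support.Finite) (f : α → β) (g : β → ℝ) :
    Exp (p.map f) g = ∑ a ∈ hp.toFinset, (p a).toReal * g (f a) := by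
  classical
  have hsub : ∀ b, b ∉ hp.toFinset.image f → ((p.map f) b).toReal * g b = 0 := by
    intro b hb
    have : (p.map f) b = 0 := by
      by_contra h
      have hbs : b ∈ (p.map f).support := (PMF.mem_support_iff _ b).mpr h
      rw [PMF.support_map] at hbs
      obtain ⟨a, ha, rfl⟩ := hbs
      exact hb (Finset.mem_image_of_mem f (hp.mem_toFinset.mpr ha))
    simp [this]
  rw [Exp, tsum_eq_sum hsub]
  have hmap : ∀ b, ((p.map f) b).toReal
      = ∑ a ∈ hp.toFinset, (if b = f a then (p a).toReal else 0) := by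
    intro b
    rw [PMF.map_apply]
    rw [tsum_eq_sum (s := hp.toFinset) (by
      intro a ha
      have : p a = 0 := by
        by_contra h
        exact ha (hp.mem_toFinset.mpr ((PMF.mem_support_iff p a).mpr h))
      simp [this])]
    rw [ENNReal.toReal_sum (fun a _ => by split <;> simp [PMF.apply_ne_top])]
    exact Finset.sum_congr rfl (fun a _ => by split <;> simp)
  calc ∑ b ∈ hp.toFinset.image f, ((p.map f) b).toReal * g b
      = ∑ b ∈ hp.toFinset.image f, ∑ a ∈ hp.toFinset,
          (if b = f a then (p a).toReal * g (f a) else 0) := by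
        refine Finset.sum_congr rfl (fun b _ => ?_)
        rw [hmap b, Finset.sum_mul]
        refine Finset.sum_congr rfl (fun a _ => ?_)
        split_ifs with h
        · rw [h]
        · simp
    _ = ∑ a ∈ hp.toFinset, ∑ b ∈ hp.toFinset.image f,
          (if b = f a then (p a).toReal * g (f a) else 0) := Finset.sum_comm
    _ = ∑ a ∈ hp.toFinset, (p a).toReal * g (f a) := by
        refine Finset.sum_congr rfl (fun a ha => ?_)
        rw [Finset.sum_ite_eq' (hp.toFinset.image f) (f a)]
        simp [Finset.mem_image_of_mem f ha]

lemma abs_vEval_le {n : ℕ} (v : Val n) (A : RandAlloc n) :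
    |vEval v A| ≤ ∑ S : Finset (Fin n), |v S| := by
  rw [vEval, tsum_fintype]
  calc |∑ S, (A S).toReal * v S| ≤ ∑ S, |(A S).toReal * v S| :=
        Finset.abs_sum_le_sum_abs _ _
    _ ≤ ∑ S, |v S| := by
        refine Finset.sum_le_sum (fun S _ => ?_)
        rw [abs_mul, abs_of_nonneg ENNReal.toReal_nonneg]
        have h1 : (A S).toReal ≤ 1 := by
          rw [← ENNReal.toReal_one]
          exact ENNReal.toReal_mono ENNReal.one_ne_top (A.coe_le_one S)
        nlinarith [abs_nonneg (v S), ENNReal.toReal_nonneg (a := A S)]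

/-- Nudge-and-round with careful coupling: if `M'` is the menu `M` with all prices
multiplied by `(1 - ε)`, then the revenue of `M'` on `D'` is at least `(1 - ε)`
times the revenue of `M` on `D`, minus `δ_M(D, D') / ε`. -/
theorem stmt3 {n : ℕ} (D D' : PMF (Val n))
    (hD : D.support.Finite) (hD' : D'.support.Finite)
    (M : Set (RandAlloc n × ℝ)) (hM : IsMenu M)
    (ε : ℝ) (hε0 : 0 < ε) (hε1 : ε < 1)
    (c : Val n → RandAlloc n × ℝ) (hc : IsOptChoice M c)
    (c' : Val n → RandAlloc n × ℝ)
    (hc' : IsOptChoice ((fun o : RandAlloc n × ℝ => (o.1, (1 - ε) * o.2)) '' M) c') :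
    (1 - ε) * RevM c D - deltaM M D D' / ε ≤ RevM c' D' := by
  classical
  -- pointwise incentive-compatibility inequality
  have hpt : ∀ v v' : Val n, (1 - ε) * (c v).2 - (c' v').2
      ≤ (1 - ε) / ε * ((vEval v (c v).1 - vEval v' (c v).1)
        + (vEval v' (c' v').1 - vEval v (c' v').1)) := by
    intro v v'
    obtain ⟨o, hoM, hoeq⟩ := hc'.1 v'
    have h2 : (c' v').2 = (1 - ε) * o.2 := by rw [← hoeq]
    have halloc : (c' v').1 = o.1 := by rw [← hoeq]
    have hmemM : ((c' v').1, o.2) ∈ M := by rw [halloc]; exact hoM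
    have IC1 := hc.2 v _ hmemM
    have hmemM' : ((c v).1, (1 - ε) * (c v).2)
        ∈ ((fun o : RandAlloc n × ℝ => (o.1, (1 - ε) * o.2)) '' M) :=
      ⟨c v, hc.1 v, rfl⟩
    have IC2 := hc'.2 v' _ hmemM'
    simp only at IC1 IC2
    rw [h2] at IC2 ⊢
    set X := (vEval v (c v).1 - vEval v' (c v).1)
      + (vEval v' (c' v').1 - vEval v (c' v').1) with hX
    have hkey : ε * ((c v).2 - o.2) ≤ X := by rw [hX]; nlinarith [IC1, IC2]
    have h3 : (c v).2 - o.2 ≤ X / ε := by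
      rw [le_div_iff₀ hε0]; linarith [hkey]
    calc (1 - ε) * (c v).2 - (1 - ε) * o.2 = (1 - ε) * ((c v).2 - o.2) := by ring
      _ ≤ (1 - ε) * (X / ε) := by
          exact mul_le_mul_of_nonneg_left h3 (by linarith)
      _ = (1 - ε) / ε * X := by ring
  -- main estimate for any coupling
  have key : ∀ π : PMF (Val n × Val n), IsCoupling π D D' →
      ε * ((1 - ε) * RevM c D - RevM c' D') ≤ deltaMC M π := by
    intro π hπ
    have hπfin : π.support.Finite := by
      refine Set.Finite.subset (hD.prod hD') ?_
      intro a ha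
      refine Set.mem_prod.mpr ⟨?_, ?_⟩
      · rw [← hπ.1, PMF.support_map]; exact ⟨a, ha, rfl⟩
      · rw [← hπ.2, PMF.support_map]; exact ⟨a, ha, rfl⟩
    set T := hπfin.toFinset with hT
    have hRev : RevM c D = ∑ a ∈ T, (π a).toReal * (c a.1).2 := by
      have h : RevM c D = Exp (π.map Prod.fst) (fun v => (c v).2) := by rw [hπ.1]; rfl
      rw [h, Exp_map π hπfin]
    have hRev' : RevM c' D' = ∑ a ∈ T, (π a).toReal * (c' a.2).2 := by
      have h : RevM c' D' = Exp (π.map Prod.snd) (fun v => (c' v).2) := by rw [hπ.2]; rfl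
      rw [h, Exp_map π hπfin]
    set g1 : Val n × Val n → ℝ :=
      fun a => vEval a.1 (c a.1).1 - vEval a.2 (c a.1).1 with hg1
    set g2 : Val n × Val n → ℝ :=
      fun a => vEval a.2 (c' a.2).1 - vEval a.1 (c' a.2).1 with hg2
    set B : Val n → ℝ := fun v => ∑ S : Finset (Fin n), |v S| with hB
    set S1 := {x | ∃ f : Val n → RandAlloc n, (∀ v, f v ∈ menuAllocs M) ∧
      x = Exp π fun p => vEval p.1 (f p.1) - vEval p.2 (f p.1)} with hS1
    set S2 := {x | ∃ f : Val n → RandAlloc n, (∀ v, f v ∈ menuAllocs M) ∧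
      x = Exp π fun p => vEval p.2 (f p.2) - vEval p.1 (f p.2)} with hS2
    have hbddgen : ∀ (h : (Val n × Val n) → ℝ),
        (∀ a, |h a| ≤ B a.1 + B a.2) →
        Exp π h ≤ ∑ a ∈ T, (π a).toReal * (B a.1 + B a.2) := by
      intro h hh
      rw [Exp_eq_sum π hπfin]
      refine Finset.sum_le_sum (fun a _ => ?_)
      exact mul_le_mul_of_nonneg_left (le_trans (le_abs_self _) (hh a))
        ENNReal.toReal_nonneg
    have hbdd1 : BddAbove S1 := by
      refine ⟨∑ a ∈ T, (π a).toReal * (B a.1 + B a.2), ?_⟩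
      rintro x ⟨f, hf, rfl⟩
      refine hbddgen _ (fun a => ?_)
      have h1 := abs_vEval_le a.1 (f a.1)
      have h2 := abs_vEval_le a.2 (f a.1)
      rw [hB]
      calc |vEval a.1 (f a.1) - vEval a.2 (f a.1)|
          ≤ |vEval a.1 (f a.1)| + |vEval a.2 (f a.1)| := abs_sub _ _
        _ ≤ _ := add_le_add h1 h2
    have hbdd2 : BddAbove S2 := by
      refine ⟨∑ a ∈ T, (π a).toReal * (B a.1 + B a.2), ?_⟩
      rintro x ⟨f, hf, rfl⟩
      refine hbddgen _ (fun a => ?_)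
      have h1 := abs_vEval_le a.2 (f a.2)
      have h2 := abs_vEval_le a.1 (f a.2)
      rw [hB]
      calc |vEval a.2 (f a.2) - vEval a.1 (f a.2)|
          ≤ |vEval a.2 (f a.2)| + |vEval a.1 (f a.2)| := abs_sub _ _
        _ ≤ _ := by rw [add_comm (B a.1)] at *; exact add_le_add h1 h2
    -- memberships
    have hmem1 : Exp π g1 ∈ S1 := by
      refine ⟨fun v => (c v).1, fun v => ⟨(c v).2, by simpa using hc.1 v⟩, rfl⟩
    have hmem2 : Exp π g2 ∈ S2 := by
      refine ⟨fun v => (c' v).1, fun v => ?_, rfl⟩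
      obtain ⟨o, hoM, hoeq⟩ := hc'.1 v
      refine ⟨o.2, ?_⟩
      show ((c' v).1, o.2) ∈ M
      have : (c' v).1 = o.1 := by rw [← hoeq]
      rw [this]; exact hoM
    -- nonnegativity of the sum of the two sups
    set t := Exp π (fun p : Val n × Val n =>
      vEval p.1 (PMF.pure ∅) - vEval p.2 (PMF.pure ∅)) with ht
    have htmem : t ∈ S1 := ⟨fun _ => PMF.pure ∅, fun _ => ⟨0, hM.1⟩, rfl⟩
    have hnegmem : -t ∈ S2 := by
      refine ⟨fun _ => PMF.pure ∅, fun _ => ⟨0, hM.1⟩, ?_⟩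
      rw [ht, ← Exp_neg]
      congr 1; funext p; ring
    have h0 : 0 ≤ sSup S1 + sSup S2 := by
      have := add_le_add (le_csSup hbdd1 htmem) (le_csSup hbdd2 hnegmem)
      linarith
    have hE1 : Exp π g1 ≤ sSup S1 := le_csSup hbdd1 hmem1
    have hE2 : Exp π g2 ≤ sSup S2 := le_csSup hbdd2 hmem2
    -- sum the pointwise estimate
    have hsum : ∑ a ∈ T, (π a).toReal * ((1 - ε) * (c a.1).2 - (c' a.2).2)
        ≤ ∑ a ∈ T, (π a).toReal * ((1 - ε) / ε * (g1 a + g2 a)) := by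
      refine Finset.sum_le_sum (fun a _ => ?_)
      exact mul_le_mul_of_nonneg_left (hpt a.1 a.2) ENNReal.toReal_nonneg
    have hL : ∑ a ∈ T, (π a).toReal * ((1 - ε) * (c a.1).2 - (c' a.2).2)
        = (1 - ε) * (∑ a ∈ T, (π a).toReal * (c a.1).2)
          - ∑ a ∈ T, (π a).toReal * (c' a.2).2 := by
      rw [Finset.mul_sum, ← Finset.sum_sub_distrib]
      exact Finset.sum_congr rfl (fun a _ => by ring)
    have hR : ∑ a ∈ T, (π a).toReal * ((1 - ε) / ε * (g1 a + g2 a))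
        = (1 - ε) / ε * (Exp π g1 + Exp π g2) := by
      rw [Exp_eq_sum π hπfin, Exp_eq_sum π hπfin, ← Finset.sum_add_distrib,
        Finset.mul_sum]
      exact Finset.sum_congr rfl (fun a _ => by ring)
    have hmid : (1 - ε) * (Exp π g1 + Exp π g2) ≤ sSup S1 + sSup S2 := by
      rcases le_or_gt 0 (Exp π g1 + Exp π g2) with h | h
      · nlinarith [hE1, hE2]
      · nlinarith [h0]
    have hfinal : ε * ((1 - ε) * RevM c D - RevM c' D')
        ≤ (1 - ε) * (Exp π g1 + Exp π g2) := by
      rw [hRev, hRev']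
      have := hsum
      rw [hL, hR] at this
      have hεne : ε ≠ 0 := ne_of_gt hε0
      calc ε * ((1 - ε) * (∑ a ∈ T, (π a).toReal * (c a.1).2)
            - ∑ a ∈ T, (π a).toReal * (c' a.2).2)
          ≤ ε * ((1 - ε) / ε * (Exp π g1 + Exp π g2)) :=
            mul_le_mul_of_nonneg_left this (le_of_lt hε0)
        _ = (1 - ε) * (Exp π g1 + Exp π g2) := by field_simp
    rw [deltaMC, ← hS1, ← hS2]
    exact le_trans hfinal hmid
  -- existence of a coupling
  have hcoup : IsCoupling (D.bind fun v => D'.map fun v' => (v, v')) D D' := by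
    constructor
    · rw [PMF.map_bind]
      have : ∀ v : Val n, (D'.map fun v' => (v, v')).map Prod.fst = PMF.pure v := by
        intro v; rw [PMF.map_comp]; exact PMF.map_const D' v
      simp only [this]
      exact PMF.bind_pure D
    · rw [PMF.map_bind]
      have : ∀ v : Val n, (D'.map fun v' => (v, v')).map Prod.snd = D' := by
        intro v; rw [PMF.map_comp]; exact PMF.map_id D'
      simp only [this]
      exact PMF.bind_const D D'
  have hne : {x | ∃ π : PMF (Val n × Val n), IsCoupling π D D' ∧ x = deltaMC M π}.Nonempty :=
    ⟨deltaMC M (D.bind fun v => D'.map fun v' => (v, v')), _, hcoup, rfl⟩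
  have h1 : ε * ((1 - ε) * RevM c D - RevM c' D') ≤ deltaM M D D' := by
    refine le_csInf hne ?_
    rintro x ⟨π, hπ, rfl⟩
    exact key π hπ
  have h2 : (1 - ε) * RevM c D - RevM c' D' ≤ deltaM M D D' / ε := by
    rw [le_div_iff₀ hε0]
    linarith [h1]
  linarith
end

section
/- Allocation-nudge: Let M be a menu where a buyer with valuation v selects (S(v), p(v)). Let M' be obtained by replacing each option (S(v), p(v)) with (S'(v), (1-ε)p(v)) where v'(S(v)) ≥ v'(S'(v)) for all v' in the support of D. Then Rev_{M'}(D) ≥ (1-ε)·Rev_M(D) - E[v(S(v)) - v(S'(v))]/ε. -/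
open scoped BigOperators

/-!
A buyer `v` facing `M'` buys the nudged option `(S'(w), (1-ε)p(w))` of some `w`. Preferring it to
its own nudged option, and using `v(S'(w)) ≤ v(S(w))` together with the incentive constraint of `v`
in `M` against `(S(w), p(w))`, gives `ε (p(v) - p(w)) ≤ v(S(v)) - v(S'(v))`. Hence `v` pays at
least `(1-ε)p(v) - (v(S(v)) - v(S'(v)))/ε` in `M'`; taking expectations over `D` gives the bound.
-/

namespace Exp

variable {α : Type*} {π : PMF α}

lemma summable (hπ : π.support.Finite) (f : α → ℝ) :
    Summable fun a => (π a).toReal * f a :=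
  summable_of_hasFiniteSupport <| hπ.subset fun a ha h => ha (by simp [h])

lemma mul_sub_mul (hπ : π.support.Finite) (s t : ℝ) (f g : α → ℝ) :
    Exp π (fun a => s * f a - t * g a) = s * Exp π f - t * Exp π g := by
  simp only [Exp, ← tsum_mul_left]
  rw [← ((summable hπ f).mul_left s).tsum_sub ((summable hπ g).mul_left t)]
  congr 1 with a
  ring

lemma mono (hπ : π.support.Finite) {f g : α → ℝ} (h : ∀ a ∈ π.support, f a ≤ g a) :
    Exp π f ≤ Exp π g := by
  refine (summable hπ f).tsum_le_tsum (fun a => ?_) (summable hπ g)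
  by_cases ha : a ∈ π.support
  · exact mul_le_mul_of_nonneg_left (h a ha) ENNReal.toReal_nonneg
  · simp [(PMF.mem_support_iff π a).not_left.mp ha]

end Exp

section Nudge

variable {n : ℕ} (v : Val n) {A A' B B' : RandAlloc n} {p q ε : ℝ}

lemma sub_le_div_of_prefers_nudged (hε : 0 < ε) (hIC : vEval v B - q ≤ vEval v A - p)
    (hB : vEval v B' ≤ vEval v B)
    (hpref : vEval v A' - (1 - ε) * p ≤ vEval v B' - (1 - ε) * q) :
    p - q ≤ (vEval v A - vEval v A') / ε := by
  rw [le_div_iff₀ hε]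
  linarith

lemma nudged_price_ge_of_prefers_nudged (hε0 : 0 < ε) (hε1 : ε ≤ 1)
    (hIC : vEval v B - q ≤ vEval v A - p) (hA : vEval v A' ≤ vEval v A)
    (hB : vEval v B' ≤ vEval v B)
    (hpref : vEval v A' - (1 - ε) * p ≤ vEval v B' - (1 - ε) * q) :
    (1 - ε) * p - (vEval v A - vEval v A') / ε ≤ (1 - ε) * q := by
  have hgap := sub_le_div_of_prefers_nudged v hε0 hIC hB hpref
  have hloss : 0 ≤ (vEval v A - vEval v A') / ε := div_nonneg (sub_nonneg.mpr hA) hε0.le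
  nlinarith

end Nudge

theorem stmt4_general {n : ℕ} (D : PMF (Val n)) (hD : D.support.Finite)
    (M : Set (RandAlloc n × ℝ))
    (ε : ℝ) (hε0 : 0 < ε) (hε1 : ε < 1)
    (c : Val n → RandAlloc n × ℝ) (hc : IsOptChoice M c)
    (S' : Val n → RandAlloc n)
    (hworse : ∀ v : Val n, ∀ v' ∈ D.support, vEval v' (S' v) ≤ vEval v' (c v).1)
    (c' : Val n → RandAlloc n × ℝ)
    (hc' : IsOptChoice {o | ∃ v ∈ D.support, o = (S' v, (1 - ε) * (c v).2)} c') :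
    (1 - ε) * RevM c D - Exp D (fun v => vEval v (c v).1 - vEval v (S' v)) / ε
      ≤ RevM c' D := by
  have hbuyer : ∀ v ∈ D.support,
      (1 - ε) * (c v).2 - ε⁻¹ * (vEval v (c v).1 - vEval v (S' v)) ≤ (c' v).2 := by
    intro v hv
    obtain ⟨w, -, hcw⟩ := hc'.1 v
    have hpref := hc'.2 v _ ⟨v, hv, rfl⟩
    rw [hcw] at hpref ⊢
    rw [inv_mul_eq_div]
    exact nudged_price_ge_of_prefers_nudged v hε0 hε1.le (hc.2 v _ (hc.1 w))
      (hworse v v hv) (hworse w v hv) hpref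
  calc (1 - ε) * RevM c D - Exp D (fun v => vEval v (c v).1 - vEval v (S' v)) / ε
      = Exp D (fun v => (1 - ε) * (c v).2 - ε⁻¹ * (vEval v (c v).1 - vEval v (S' v))) := by
        rw [Exp.mul_sub_mul hD, div_eq_inv_mul]; rfl
    _ ≤ RevM c' D := Exp.mono hD hbuyer

/-- Allocation-nudge: replacing each purchased option `(S(v), p(v))` of `M` by a
weakly worse allocation `(S'(v), (1-ε)·p(v))` yields a menu `M'` with
`Rev_{M'}(D) ≥ (1-ε)·Rev_M(D) - E[v(S(v)) - v(S'(v))]/ε`. -/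
theorem stmt4 {n : ℕ} (D : PMF (Val n)) (hD : D.support.Finite)
    (hne : D.support.Nonempty)
    (M : Set (RandAlloc n × ℝ)) (hM : IsMenu M)
    (ε : ℝ) (hε0 : 0 < ε) (hε1 : ε < 1)
    (c : Val n → RandAlloc n × ℝ) (hc : IsOptChoice M c)
    (S' : Val n → RandAlloc n)
    (hworse : ∀ v : Val n, ∀ v' ∈ D.support, vEval v' (S' v) ≤ vEval v' (c v).1)
    (c' : Val n → RandAlloc n × ℝ)
    (hc' : IsOptChoice {o | ∃ v ∈ D.support, o = (S' v, (1 - ε) * (c v).2)} c') :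
    (1 - ε) * RevM c D - Exp D (fun v => vEval v (c v).1 - vEval v (S' v)) / ε
      ≤ RevM c' D :=
  stmt4_general D hD M ε hε0 hε1 c hc S' hworse c' hc'
end

section
/- A bucket mechanism with exclusive buckets B_0, B_1, ..., B_k and joint bucket B has menu complexity at most 2·n^{k+1} and strong symmetric menu complexity at most n·2^{k+1}. -/
/-!
A purchasable set is determined by its traces on the buckets, since these cover `[n]`: at most
one element of each exclusive bucket `D`, i.e. one of `|D| + 1 ≤ n` choices when `D ≠ [n]`, and
`∅` or `B` on the joint bucket. Likewise its symmetric profile is a trace on `B0`, a size in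
`{0, 1}` for each other exclusive bucket, and `∅` or `B`. If some exclusive bucket is all of
`[n]`, every purchasable set has at most one element, which leaves at most `n + 1 ≤ 2n` of them.
-/

/-- The purchasable sets of a bucket mechanism with exclusive buckets
`B0, Bs 0, ..., Bs (k-1)` and joint bucket `B`: at most one item per exclusive
bucket, and the joint bucket taken entirely or not at all. -/
def Purchasable {n k : ℕ} (B0 : Finset (Fin n)) (Bs : Fin k → Finset (Fin n))
    (B : Finset (Fin n)) : Set (Finset (Fin n)) :=
  {S | (S ∩ B0).card ≤ 1 ∧ (∀ i, (S ∩ Bs i).card ≤ 1) ∧ (B ⊆ S ∨ S ∩ B = ∅)}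

open Finset

def powersetCardLeOne {α : Type*} (D : Finset α) : Finset (Finset α) :=
  D.powerset.filter (#· ≤ 1)

section

variable {α : Type*} {A D : Finset α}

@[simp]
theorem mem_powersetCardLeOne : A ∈ powersetCardLeOne D ↔ A ⊆ D ∧ #A ≤ 1 := by
  simp [powersetCardLeOne]

theorem powersetCardLeOne_eq [DecidableEq α] (D : Finset α) :
    powersetCardLeOne D = powersetCard 0 D ∪ powersetCard 1 D := by
  ext A
  simp only [mem_powersetCardLeOne, mem_union, mem_powersetCard]
  rw [Nat.le_one_iff_eq_zero_or_eq_one]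
  tauto

theorem card_powersetCardLeOne (D : Finset α) : #(powersetCardLeOne D) = #D + 1 := by
  classical
  rw [powersetCardLeOne_eq, card_union_of_disjoint, card_powersetCard, card_powersetCard]
  · simp [add_comm]
  · exact disjoint_left.2 fun A h0 h1 => by simp_all [mem_powersetCard]

end

theorem card_add_one_le_of_ne_univ {n : ℕ} {D : Finset (Fin n)} (hD : D ≠ univ) :
    #D + 1 ≤ n := by
  simpa using (card_lt_iff_ne_univ D).2 hD

namespace Purchasable

variable {n k : ℕ} {B0 : Finset (Fin n)} {Bs : Fin k → Finset (Fin n)} {B S : Finset (Fin n)}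

theorem inter_joint_mem (hS : S ∈ Purchasable B0 Bs B) : S ∩ B ∈ ({∅, B} : Finset _) := by
  rcases hS.2.2 with h | h
  · simp [inter_eq_right.2 h]
  · simp [h]

theorem card_le_one (hS : S ∈ Purchasable B0 Bs B)
    (huniv : B0 = univ ∨ ∃ j, Bs j = univ) : #S ≤ 1 := by
  rcases huniv with h | ⟨j, h⟩
  · simpa [h] using hS.1
  · simpa [h] using hS.2.1 j

theorem ncard_le_of_bucket_eq_univ (huniv : B0 = univ ∨ ∃ j, Bs j = univ) :
    (Purchasable B0 Bs B).ncard ≤ n + 1 := by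
  calc (Purchasable B0 Bs B).ncard
      ≤ ((powersetCardLeOne univ : Finset (Finset (Fin n))) : Set (Finset (Fin n))).ncard :=
        Set.ncard_le_ncard fun S hS => by simpa using card_le_one hS huniv
    _ = n + 1 := by rw [Set.ncard_coe_finset, card_powersetCardLeOne, card_univ, Fintype.card_fin]

theorem eq_union_inter_buckets (hcover : B0 ∪ B ∪ univ.biUnion Bs = univ) (S : Finset (Fin n)) :
    S = S ∩ B0 ∪ S ∩ B ∪ univ.biUnion (fun i => S ∩ Bs i) := by
  conv_lhs => rw [← inter_univ S, ← hcover]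
  simp only [inter_union_distrib_left, inter_biUnion]

theorem subset_image_union (hcover : B0 ∪ B ∪ univ.biUnion Bs = univ) :
    Purchasable B0 Bs B ⊆ ((powersetCardLeOne B0 ×ˢ
      (Fintype.piFinset fun i => powersetCardLeOne (Bs i)) ×ˢ ({∅, B} : Finset _)).image
        fun p => p.1 ∪ p.2.2 ∪ univ.biUnion p.2.1 : Finset (Finset (Fin n))) := by
  intro S hS
  rw [mem_coe, mem_image]
  refine ⟨(S ∩ B0, fun i => S ∩ Bs i, S ∩ B), ?_, (eq_union_inter_buckets hcover S).symm⟩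
  simp only [mem_product, Fintype.mem_piFinset, mem_powersetCardLeOne, inter_subset_right,
    true_and]
  exact ⟨hS.1, hS.2.1, inter_joint_mem hS⟩

theorem ncard_le (hcover : B0 ∪ B ∪ univ.biUnion Bs = univ) :
    (Purchasable B0 Bs B).ncard ≤ (#B0 + 1) * (∏ i, (#(Bs i) + 1)) * 2 := by
  calc (Purchasable B0 Bs B).ncard ≤ _ := Set.ncard_le_ncard (subset_image_union hcover)
    _ ≤ _ := (Set.ncard_coe_finset _).trans_le card_image_le
    _ ≤ _ := by
      simp only [card_product, Fintype.card_piFinset, card_powersetCardLeOne, mul_assoc]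
      gcongr
      exact card_insert_le _ _

def profile (B0 : Finset (Fin n)) (Bs : Fin k → Finset (Fin n)) (B S : Finset (Fin n)) :
    Finset (Fin n) × (Fin k → ℕ) × Finset (Fin n) :=
  (S ∩ B0, fun i => #(S ∩ Bs i), S ∩ B)

theorem profile_mem (hS : S ∈ Purchasable B0 Bs B) :
    profile B0 Bs B S ∈ powersetCardLeOne B0 ×ˢ
      Fintype.piFinset (fun _ => range 2) ×ˢ ({∅, B} : Finset _) := by
  simp only [profile, mem_product, Fintype.mem_piFinset, mem_range, mem_powersetCardLeOne,
    inter_subset_right, true_and, Nat.lt_succ_iff]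
  exact ⟨hS.1, hS.2.1, inter_joint_mem hS⟩

theorem ncard_image_profile_le :
    (profile B0 Bs B '' Purchasable B0 Bs B).ncard ≤ (#B0 + 1) * 2 ^ k * 2 := by
  calc (profile B0 Bs B '' Purchasable B0 Bs B).ncard
      ≤ (↑(powersetCardLeOne B0 ×ˢ Fintype.piFinset (fun _ : Fin k => range 2) ×ˢ
          ({∅, B} : Finset _)) : Set _).ncard :=
        Set.ncard_le_ncard <| by rintro _ ⟨S, hS, rfl⟩; exact profile_mem hS
    _ ≤ _ := by
      simp only [Set.ncard_coe_finset, card_product, Fintype.card_piFinset, card_powersetCardLeOne,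
        card_range, prod_const, card_univ, Fintype.card_fin, mul_assoc]
      gcongr
      exact card_insert_le _ _

end Purchasable

theorem stmt8_general {n k : ℕ} (hn : 1 ≤ n)
    (B0 : Finset (Fin n)) (Bs : Fin k → Finset (Fin n)) (B : Finset (Fin n))
    (hcover : B0 ∪ B ∪ Finset.univ.biUnion Bs = Finset.univ) :
    Set.ncard (Purchasable B0 Bs B) ≤ 2 * n ^ (k + 1) ∧
    Set.ncard ((fun S : Finset (Fin n) =>
        (S ∩ B0, fun i => (S ∩ Bs i).card, S ∩ B)) '' Purchasable B0 Bs B)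
      ≤ n * 2 ^ (k + 1) := by
  have hsmall : n + 1 ≤ 2 * n := by omega
  constructor
  · by_cases huniv : B0 = univ ∨ ∃ j, Bs j = univ
    · calc (Purchasable B0 Bs B).ncard ≤ n + 1 := Purchasable.ncard_le_of_bucket_eq_univ huniv
        _ ≤ 2 * n ^ (k + 1) := hsmall.trans (by gcongr; exact Nat.le_self_pow (by omega) n)
    · simp only [not_or, not_exists] at huniv
      calc (Purchasable B0 Bs B).ncard ≤ (#B0 + 1) * (∏ i, (#(Bs i) + 1)) * 2 :=
            Purchasable.ncard_le hcover
        _ ≤ n * (∏ _i : Fin k, n) * 2 := by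
            gcongr with i
            exacts [card_add_one_le_of_ne_univ huniv.1, card_add_one_le_of_ne_univ (huniv.2 i)]
        _ = 2 * n ^ (k + 1) := by rw [prod_const, card_univ, Fintype.card_fin]; ring
  · change (Purchasable.profile B0 Bs B '' Purchasable B0 Bs B).ncard ≤ _
    by_cases h0 : B0 = univ
    · calc _ ≤ (Purchasable B0 Bs B).ncard := Set.ncard_image_le (Set.toFinite _)
        _ ≤ n + 1 := Purchasable.ncard_le_of_bucket_eq_univ (.inl h0)
        _ ≤ n * 2 ^ (k + 1) := by
            rw [mul_comm n]
            exact hsmall.trans (by gcongr; exact Nat.le_self_pow (by omega) 2)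
    · calc _ ≤ (#B0 + 1) * 2 ^ k * 2 := Purchasable.ncard_image_profile_le
        _ ≤ n * 2 ^ k * 2 := by gcongr; exact card_add_one_le_of_ne_univ h0
        _ = n * 2 ^ (k + 1) := by ring

/-- A bucket mechanism with exclusive buckets `B0, B1, ..., Bk` and joint bucket `B`
has menu complexity (number of distinct purchasable sets) at most `2·n^(k+1)` and
strong symmetric menu complexity (number of equivalence classes of purchasable sets
under permutations within each `Bs i`, recorded by `(S ∩ B0, (|S ∩ Bs i|)_i, S ∩ B)`)
at most `n·2^(k+1)`. -/
theorem stmt8 {n k : ℕ} (hn : 1 ≤ n)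
    (B0 : Finset (Fin n)) (Bs : Fin k → Finset (Fin n)) (B : Finset (Fin n))
    (hd0 : ∀ i, Disjoint B0 (Bs i)) (hdB0 : Disjoint B0 B)
    (hdBi : ∀ i, Disjoint (Bs i) B)
    (hdij : ∀ i j, i ≠ j → Disjoint (Bs i) (Bs j))
    (hcover : B0 ∪ B ∪ Finset.univ.biUnion Bs = Finset.univ) :
    Set.ncard (Purchasable B0 Bs B) ≤ 2 * n ^ (k + 1) ∧
    Set.ncard ((fun S : Finset (Fin n) =>
        (S ∩ B0, fun i => (S ∩ Bs i).card, S ∩ B)) '' Purchasable B0 Bs B)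
      ≤ n * 2 ^ (k + 1) :=
  stmt8_general hn B0 Bs B hcover
end

section
/- Existence of a well-separated code: For every ε with 0 < ε < 1 and all sufficiently large even n, setting k = Θ(ln(n)/ε) (with k even), there exist n vectors r_1, ..., r_n ∈ {0,1}^k, each with exactly k/2 ones, such that for all i ≠ j, the number of coordinates ℓ with r_{iℓ} = 1 and r_{jℓ} = 0 is at least k/6. -/
open Finset Real

namespace Stmt9Aux

lemma choose_le_real (h b : ℕ) (hb : b ≤ h) :
    (h.choose b : ℝ) ≤ 3 ^ b * (3 / 2) ^ (h - b) := by
  have expand := add_pow (1/3 : ℝ) (2/3) h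
  have hsum : ∑ k ∈ Finset.range (h+1), (1/3:ℝ)^k * (2/3)^(h-k) * h.choose k = 1 := by
    rw [← expand]; norm_num
  have hterm : (1/3:ℝ)^b * (2/3)^(h-b) * h.choose b ≤ 1 := by
    refine le_of_le_of_eq ?_ hsum
    apply Finset.single_le_sum (f := fun k => (1/3:ℝ)^k * (2/3)^(h-k) * (h.choose k : ℝ))
    · intro i _; positivity
    · simpa using Nat.lt_succ_of_le hb
  have hid : ((1/3:ℝ)^b * (2/3)^(h-b)) * ((3:ℝ)^b * (3/2)^(h-b)) = 1 := by
    rw [mul_mul_mul_comm, ← mul_pow, ← mul_pow]; norm_num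
  have hpos : (0:ℝ) < (3:ℝ)^b * (3/2)^(h-b) := by positivity
  calc (h.choose b : ℝ) = ((1/3:ℝ)^b * (2/3)^(h-b) * h.choose b) * ((3:ℝ)^b * (3/2)^(h-b)) := by
        rw [mul_comm ((1/3:ℝ)^b * (2/3)^(h-b)) (h.choose b : ℝ), mul_assoc, hid, mul_one]
    _ ≤ 1 * ((3:ℝ)^b * (3/2)^(h-b)) := by
        exact mul_le_mul_of_nonneg_right hterm hpos.le
    _ = 3 ^ b * (3/2) ^ (h - b) := by rw [one_mul]

lemma slice_card (h a : ℕ) (u : Finset (Fin (2*h))) (hu : u.card = h) :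
    (((Finset.univ : Finset (Fin (2*h))).powersetCard h).filter
        (fun v => (u ∩ v).card = a)).card ≤ h.choose a * h.choose (h - a) := by
  classical
  have hcompl : ((Finset.univ : Finset (Fin (2*h))) \ u).card = h := by
    rw [Finset.card_sdiff_of_subset (Finset.subset_univ u), hu, Finset.card_univ, Fintype.card_fin]
    omega
  have hle : (((Finset.univ : Finset (Fin (2*h))).powersetCard h).filter
        (fun v => (u ∩ v).card = a)).card ≤
      ((u.powersetCard a) ×ˢ (((Finset.univ : Finset (Fin (2*h))) \ u).powersetCard (h - a))).card := by
    apply Finset.card_le_card_of_injOn (fun v => (v ∩ u, v \ u))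
    · intro v hv
      simp only [Finset.mem_coe, Finset.mem_filter, Finset.mem_powersetCard] at hv
      obtain ⟨⟨-, hvc⟩, hva⟩ := hv
      have hvu : (v ∩ u).card = a := by rw [Finset.inter_comm]; exact hva
      simp only [Finset.mem_coe, Finset.mem_product, Finset.mem_powersetCard]
      refine ⟨⟨Finset.inter_subset_right, hvu⟩, ?_, ?_⟩
      · intro x hx
        rw [Finset.mem_sdiff] at hx ⊢
        exact ⟨Finset.mem_univ x, hx.2⟩
      · have := Finset.card_sdiff_add_card_inter v u
        omega
    · intro v1 h1 v2 h2 heq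
      have e1 : v1 ∩ u = v2 ∩ u := congrArg Prod.fst heq
      have e2 : v1 \ u = v2 \ u := congrArg Prod.snd heq
      calc v1 = v1 \ u ∪ v1 ∩ u := (Finset.sdiff_union_inter v1 u).symm
        _ = v2 \ u ∪ v2 ∩ u := by rw [e1, e2]
        _ = v2 := Finset.sdiff_union_inter v2 u
  calc _ ≤ _ := hle
    _ = h.choose a * h.choose (h - a) := by
        rw [Finset.card_product, Finset.card_powersetCard, Finset.card_powersetCard, hu, hcompl]

/-- The per-vector bound on the number of "bad" balanced vectors. -/
noncomputable def B (h : ℕ) : ℝ := ((h:ℝ)+1) * ((3/2:ℝ)^(2*h) * (2:ℝ)^((2*(h:ℝ))/3))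

lemma badset_card (h : ℕ) (u : Finset (Fin (2*h))) (hu : u.card = h) :
    ((((Finset.univ : Finset (Fin (2*h))).powersetCard h).filter
        (fun v => 2*h < 3*(u ∩ v).card)).card : ℝ) ≤ B h := by
  classical
  set P := (Finset.univ : Finset (Fin (2*h))).powersetCard h with hP
  set A := (Finset.range (h+1)).filter (fun a => 2*h < 3*a) with hA
  have hsub : P.filter (fun v => 2*h < 3*(u ∩ v).card) ⊆
      A.biUnion (fun a => P.filter (fun v => (u ∩ v).card = a)) := by
    intro v hv
    rw [Finset.mem_filter] at hv
    have hcle : (u ∩ v).card ≤ h := by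
      have := Finset.card_le_card (Finset.inter_subset_left (s₁ := u) (s₂ := v))
      omega
    rw [Finset.mem_biUnion]
    refine ⟨(u ∩ v).card, ?_, ?_⟩
    · rw [hA, Finset.mem_filter, Finset.mem_range]
      exact ⟨by omega, hv.2⟩
    · rw [Finset.mem_filter]; exact ⟨hv.1, rfl⟩
  have hnat : (P.filter (fun v => 2*h < 3*(u ∩ v).card)).card ≤
      ∑ a ∈ A, (P.filter (fun v => (u ∩ v).card = a)).card :=
    le_trans (Finset.card_le_card hsub) (Finset.card_biUnion_le)
  have hslice : ∀ a ∈ A, ((P.filter (fun v => (u ∩ v).card = a)).card : ℝ) ≤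
      (3/2:ℝ)^(2*h) * (2:ℝ)^((2*(h:ℝ))/3) := by
    intro a ha
    rw [hA, Finset.mem_filter, Finset.mem_range] at ha
    obtain ⟨har, hab⟩ := ha
    have hah : a ≤ h := by omega
    set b := h - a with hb
    have hbh : b ≤ h := by omega
    have h3b : 3 * b ≤ h := by omega
    have hsymm : h.choose a = h.choose b := by
      rw [hb, Nat.choose_symm hah]
    have step1 : ((P.filter (fun v => (u ∩ v).card = a)).card : ℝ) ≤
        (h.choose b : ℝ) * (h.choose b : ℝ) := by
      have := slice_card h a u hu
      rw [hsymm, ← hb] at this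
      exact_mod_cast this
    have step2 : (h.choose b : ℝ) ≤ (3/2:ℝ)^h * 2^b := by
      refine le_trans (choose_le_real h b hbh) (le_of_eq ?_)
      calc (3:ℝ)^b * (3/2)^(h-b) = ((3/2:ℝ)^b * 2^b) * (3/2)^(h-b) := by
            rw [← mul_pow]; norm_num
        _ = (3/2:ℝ)^(b + (h-b)) * 2^b := by rw [pow_add]; ring
        _ = (3/2:ℝ)^h * 2^b := by rw [Nat.add_sub_cancel' hbh]
    have hchoosenn : (0:ℝ) ≤ (h.choose b : ℝ) := by positivity
    have step3 : ((2:ℝ)^b) * ((2:ℝ)^b) ≤ (2:ℝ)^((2*(h:ℝ))/3) := by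
      have e1 : ((2:ℝ)^b) * ((2:ℝ)^b) = (2:ℝ)^((2*b : ℕ) : ℝ) := by
        rw [Real.rpow_natCast, ← pow_add]
        congr 1; omega
      rw [e1]
      apply Real.rpow_le_rpow_of_exponent_le (by norm_num)
      have : ((3*b : ℕ) : ℝ) ≤ (h : ℝ) := by exact_mod_cast h3b
      push_cast at this ⊢
      linarith
    calc ((P.filter (fun v => (u ∩ v).card = a)).card : ℝ)
        ≤ (h.choose b : ℝ) * (h.choose b : ℝ) := step1
      _ ≤ ((3/2:ℝ)^h * 2^b) * ((3/2:ℝ)^h * 2^b) := by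
          apply mul_le_mul step2 step2 hchoosenn
          positivity
      _ = (3/2:ℝ)^(2*h) * (((2:ℝ)^b) * ((2:ℝ)^b)) := by
          rw [two_mul, pow_add]; ring
      _ ≤ (3/2:ℝ)^(2*h) * (2:ℝ)^((2*(h:ℝ))/3) := by
          apply mul_le_mul_of_nonneg_left step3
          positivity
  have hsumle : (∑ a ∈ A, ((P.filter (fun v => (u ∩ v).card = a)).card : ℝ)) ≤
      (A.card : ℝ) * ((3/2:ℝ)^(2*h) * (2:ℝ)^((2*(h:ℝ))/3)) := by
    have := Finset.sum_le_card_nsmul A _ _ hslice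
    rwa [nsmul_eq_mul] at this
  have hAcard : (A.card : ℝ) ≤ (h:ℝ) + 1 := by
    have : A.card ≤ h + 1 := by
      calc A.card ≤ (Finset.range (h+1)).card := Finset.card_le_card (Finset.filter_subset _ _)
        _ = h + 1 := Finset.card_range _
    exact_mod_cast this
  calc ((P.filter (fun v => 2*h < 3*(u ∩ v).card)).card : ℝ)
      ≤ (∑ a ∈ A, ((P.filter (fun v => (u ∩ v).card = a)).card : ℝ)) := by
        exact_mod_cast hnat
    _ ≤ (A.card : ℝ) * ((3/2:ℝ)^(2*h) * (2:ℝ)^((2*(h:ℝ))/3)) := hsumle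
    _ ≤ ((h:ℝ)+1) * ((3/2:ℝ)^(2*h) * (2:ℝ)^((2*(h:ℝ))/3)) := by
        apply mul_le_mul_of_nonneg_right hAcard
        positivity
    _ = B h := rfl

set_option maxHeartbeats 2000000 in
lemma key_ineq (n h : ℕ) (hln : Real.log n ≤ (h:ℝ)/35) (hh : 14000 ≤ h) (hn1 : 1 ≤ n) :
    (n : ℝ) * B h < ((2*h).choose h : ℝ) := by
  have hhR : (14000:ℝ) ≤ (h:ℝ) := by exact_mod_cast hh
  have hhpos : (0:ℝ) < (h:ℝ) := by linarith
  have hnpos : (0:ℝ) < (n:ℝ) := by exact_mod_cast hn1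
  -- central binomial lower bound
  have hcb : (4:ℝ)^h < (h:ℝ) * ((2*h).choose h : ℝ) := by
    have := Nat.four_pow_lt_mul_centralBinom h (by omega)
    rw [Nat.centralBinom_eq_two_mul_choose] at this
    exact_mod_cast this
  -- main log inequality
  have hs : (n:ℝ) * B h * (h:ℝ) < (4:ℝ)^h := by
    set s := Real.sqrt (h:ℝ) with hsdef
    have hsnn : 0 ≤ s := Real.sqrt_nonneg _
    have hs2 : s * s = (h:ℝ) := Real.mul_self_sqrt hhpos.le
    have hs118 : (118:ℝ) ≤ s := by nlinarith [hs2, hhR, hsnn]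
    have hspos : 0 < s := by linarith
    have hlogh : Real.log (h:ℝ) ≤ 2*s - 2 := by
      have h1 : Real.log s = Real.log (h:ℝ) / 2 := Real.log_sqrt hhpos.le
      have h2 : Real.log s ≤ s - 1 := Real.log_le_sub_one_of_pos hspos
      linarith
    have hlogh1 : Real.log ((h:ℝ)+1) ≤ 2*s := by
      have hsq : Real.sqrt ((h:ℝ)+1) ≤ s + 1 := by
        have hle : ((h:ℝ)+1) ≤ (s+1)^2 := by nlinarith [hs2, hsnn]
        calc Real.sqrt ((h:ℝ)+1) ≤ Real.sqrt ((s+1)^2) := Real.sqrt_le_sqrt hle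
          _ = s + 1 := Real.sqrt_sq (by linarith)
      have h1 : Real.log (Real.sqrt ((h:ℝ)+1)) = Real.log ((h:ℝ)+1) / 2 :=
        Real.log_sqrt (by linarith)
      have h2 : Real.log (Real.sqrt ((h:ℝ)+1)) ≤ Real.sqrt ((h:ℝ)+1) - 1 :=
        Real.log_le_sub_one_of_pos (Real.sqrt_pos.mpr (by linarith))
      linarith
    have hl3 : 41 * Real.log 3 ≤ 65 * Real.log 2 := by
      have hpow : ((3:ℝ)^(41:ℕ)) ≤ ((2:ℝ)^(65:ℕ)) := by norm_num
      have hlog := (Real.log_le_log_iff (by positivity) (by positivity)).mpr hpow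
      rw [Real.log_pow, Real.log_pow] at hlog
      push_cast at hlog
      linarith
    have l2lo : (0.6931471803:ℝ) < Real.log 2 := Real.log_two_gt_d9
    have hp1 : (0:ℝ) < (h:ℝ)+1 := by linarith
    have hp2 : (0:ℝ) < (3/2:ℝ)^(2*h) := by positivity
    have hp3 : (0:ℝ) < (2:ℝ)^((2*(h:ℝ))/3) := by positivity
    have hBpos : (0:ℝ) < B h := by unfold B; positivity
    have hLpos : (0:ℝ) < (n:ℝ) * B h * (h:ℝ) := by positivity
    have hRpos : (0:ℝ) < (4:ℝ)^h := by positivity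
    have hlogB : Real.log (B h) = Real.log ((h:ℝ)+1) + ((2*(h:ℝ)) * Real.log (3/2) +
        ((2*(h:ℝ))/3) * Real.log 2) := by
      unfold B
      rw [Real.log_mul hp1.ne' (mul_pos hp2 hp3).ne', Real.log_mul hp2.ne' hp3.ne',
        Real.log_pow, Real.log_rpow (by norm_num : (0:ℝ) < 2)]
      push_cast
      ring
    have hlogL : Real.log ((n:ℝ) * B h * (h:ℝ)) =
        Real.log n + (Real.log ((h:ℝ)+1) + ((2*(h:ℝ)) * Real.log (3/2) +
          ((2*(h:ℝ))/3) * Real.log 2)) + Real.log (h:ℝ) := by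
      rw [Real.log_mul (mul_pos hnpos hBpos).ne' hhpos.ne',
        Real.log_mul hnpos.ne' hBpos.ne', hlogB]
    have hlogR : Real.log ((4:ℝ)^h) = (h:ℝ) * (2 * Real.log 2) := by
      have h4 : (4:ℝ) = 2^(2:ℕ) := by norm_num
      rw [Real.log_pow, h4, Real.log_pow]
      push_cast
      ring
    rw [← Real.exp_log hLpos, ← Real.exp_log hRpos]
    apply Real.exp_lt_exp.mpr
    rw [hlogL, hlogR]
    have hlog32 : Real.log (3/2) = Real.log 3 - Real.log 2 :=
      Real.log_div (by norm_num) (by norm_num)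
    rw [hlog32]
    have hl3h : 2*(h:ℝ) * Real.log 3 ≤ (130/41) * (h:ℝ) * Real.log 2 := by
      nlinarith [hl3, hhpos.le]
    have hl2h : (0.6931471803:ℝ) * (h:ℝ) ≤ (h:ℝ) * Real.log 2 := by
      nlinarith [l2lo, hhpos.le]
    have hss : 118 * s ≤ s * s := by nlinarith [hs118, hsnn]
    linarith [hl3h, hl2h, hss, hln, hlogh, hlogh1, hs2]
  have hlt : (n:ℝ) * B h * (h:ℝ) < (h:ℝ) * ((2*h).choose h : ℝ) := hs.trans hcb
  have hfin : (n:ℝ) * B h * (h:ℝ) < ((2*h).choose h : ℝ) * (h:ℝ) := by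
    calc (n:ℝ) * B h * (h:ℝ) < (h:ℝ) * ((2*h).choose h : ℝ) := hlt
      _ = ((2*h).choose h : ℝ) * (h:ℝ) := by ring
  exact lt_of_mul_lt_mul_right hfin hhpos.le

lemma greedy (h n : ℕ) (hkey : (n:ℝ) * B h < ((2*h).choose h : ℝ)) :
    ∀ m : ℕ, m ≤ n → ∃ S : Fin m → Finset (Fin (2*h)),
      (∀ i, (S i).card = h) ∧ ∀ i j, i ≠ j → 3 * (S i ∩ S j).card ≤ 2*h := by
  intro m
  induction m with
  | zero =>
    intro _
    exact ⟨fun i => i.elim0, fun i => i.elim0, fun i => i.elim0⟩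
  | succ m ih =>
    intro hm
    obtain ⟨S, hScard, hSsep⟩ := ih (by omega)
    classical
    set P := (Finset.univ : Finset (Fin (2*h))).powersetCard h with hP
    set Bad := P.filter (fun v => ∃ i : Fin m, 2*h < 3*(S i ∩ v).card) with hBad
    have hBadP : Bad ⊆ P := Finset.filter_subset _ _
    have hsub : Bad ⊆ (Finset.univ : Finset (Fin m)).biUnion
        (fun i => P.filter (fun v => 2*h < 3*(S i ∩ v).card)) := by
      intro v hv
      rw [hBad, Finset.mem_filter] at hv
      obtain ⟨hvP, i, hi⟩ := hv
      rw [Finset.mem_biUnion]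
      exact ⟨i, Finset.mem_univ i, Finset.mem_filter.mpr ⟨hvP, hi⟩⟩
    have hBadcard : (Bad.card : ℝ) ≤ (m:ℝ) * B h := by
      have h1 : Bad.card ≤ ∑ i : Fin m, (P.filter (fun v => 2*h < 3*(S i ∩ v).card)).card :=
        le_trans (Finset.card_le_card hsub) Finset.card_biUnion_le
      have h2 : (Bad.card : ℝ) ≤
          ∑ i : Fin m, ((P.filter (fun v => 2*h < 3*(S i ∩ v).card)).card : ℝ) := by
        exact_mod_cast h1
      have h3 : ∑ i : Fin m, ((P.filter (fun v => 2*h < 3*(S i ∩ v).card)).card : ℝ) ≤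
          (Finset.univ : Finset (Fin m)).card * B h := by
        have := Finset.sum_le_card_nsmul (Finset.univ : Finset (Fin m))
          (fun i => ((P.filter (fun v => 2*h < 3*(S i ∩ v).card)).card : ℝ)) (B h)
          (fun i _ => badset_card h (S i) (hScard i))
        rwa [nsmul_eq_mul] at this
      rw [Finset.card_univ, Fintype.card_fin] at h3
      exact h2.trans h3
    have hBnn : (0:ℝ) ≤ B h := by unfold B; positivity
    have hmn : (m:ℝ) ≤ (n:ℝ) := by exact_mod_cast (by omega : m ≤ n)
    have hlt : Bad.card < P.card := by
      have hPcard : P.card = (2*h).choose h := by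
        rw [hP, Finset.card_powersetCard, Finset.card_univ, Fintype.card_fin]
      have hR : (Bad.card : ℝ) < (P.card : ℝ) := by
        rw [hPcard]
        calc (Bad.card : ℝ) ≤ (m:ℝ) * B h := hBadcard
          _ ≤ (n:ℝ) * B h := mul_le_mul_of_nonneg_right hmn hBnn
          _ < ((2*h).choose h : ℝ) := hkey
      exact_mod_cast hR
    obtain ⟨v, hvP, hvBad⟩ : ∃ v ∈ P, v ∉ Bad := by
      by_contra hcon
      push_neg at hcon
      exact absurd (Finset.card_le_card hcon) (not_le.mpr hlt)
    have hvcard : v.card = h := (Finset.mem_powersetCard.mp hvP).2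
    have hvgood : ∀ i : Fin m, 3 * (S i ∩ v).card ≤ 2*h := by
      intro i
      by_contra hcon
      push_neg at hcon
      exact hvBad (by rw [hBad, Finset.mem_filter]; exact ⟨hvP, i, hcon⟩)
    refine ⟨Fin.snoc S v, ?_, ?_⟩
    · intro i
      refine Fin.lastCases ?_ ?_ i
      · simp [Fin.snoc_last, hvcard]
      · intro i'
        simp [Fin.snoc_castSucc, hScard]
    · intro i j hij
      rcases Fin.eq_castSucc_or_eq_last i with ⟨i', rfl⟩ | rfl
      · rcases Fin.eq_castSucc_or_eq_last j with ⟨j', rfl⟩ | rfl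
        · have hij' : i' ≠ j' := fun hc => hij (by rw [hc])
          simpa [Fin.snoc_castSucc] using hSsep i' j' hij'
        · simpa [Fin.snoc_castSucc, Fin.snoc_last] using hvgood i'
      · rcases Fin.eq_castSucc_or_eq_last j with ⟨j', rfl⟩ | rfl
        · have := hvgood j'
          rw [Finset.inter_comm] at this
          simpa [Fin.snoc_castSucc, Fin.snoc_last] using this
        · exact absurd rfl hij

end Stmt9Aux

open Stmt9Aux in
/-- Existence of a well-separated balanced code. -/
theorem stmt9 (ε : ℝ) (hε0 : 0 < ε) (hε1 : ε < 1) :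
    ∃ C : ℝ, 1 ≤ C ∧ ∃ N : ℕ, ∀ n : ℕ, N ≤ n → Even n →
      ∃ k : ℕ, Even k ∧ Real.log n / ε ≤ (k : ℝ) ∧ (k : ℝ) ≤ C * Real.log n / ε ∧
        ∃ r : Fin n → Fin k → Bool,
          (∀ i, (Finset.univ.filter fun ℓ => r i ℓ = true).card = k / 2) ∧
          ∀ i j, i ≠ j →
            (k : ℝ) / 6 ≤
              ((Finset.univ.filter fun ℓ => r i ℓ = true ∧ r j ℓ = false).card : ℝ) := by
  classical
  refine ⟨72, by norm_num, ⌈Real.exp 400⌉₊, ?_⟩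
  intro n hn _hneven
  have hexp : Real.exp 400 ≤ (n:ℝ) :=
    le_trans (Nat.le_ceil _) (by exact_mod_cast hn)
  have hnpos : (0:ℝ) < (n:ℝ) := lt_of_lt_of_le (Real.exp_pos 400) hexp
  have hn1 : 1 ≤ n := by exact_mod_cast Nat.succ_le_of_lt (by exact_mod_cast hnpos)
  have hlog400 : (400:ℝ) ≤ Real.log n := by
    calc (400:ℝ) = Real.log (Real.exp 400) := (Real.log_exp 400).symm
      _ ≤ Real.log n := (Real.log_le_log_iff (Real.exp_pos _) hnpos).mpr hexp
  set L := Real.log n / ε with hL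
  have hLlog : Real.log n ≤ L := by
    rw [hL, le_div_iff₀ hε0]
    nlinarith [hlog400, hε1.le]
  have hL400 : (400:ℝ) ≤ L := hlog400.trans hLlog
  set h := ⌈(35:ℝ) * L⌉₊ with hh
  have hhge : (35:ℝ) * L ≤ (h:ℝ) := Nat.le_ceil _
  have hhle : (h:ℝ) ≤ 35 * L + 1 := by
    have := Nat.ceil_lt_add_one (by positivity : (0:ℝ) ≤ 35 * L)
    linarith [this.le]
  have hh14 : 14000 ≤ h := by
    have : (14000:ℝ) ≤ (h:ℝ) := by linarith
    exact_mod_cast this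
  have hln35 : Real.log n ≤ (h:ℝ)/35 := by linarith
  have hkey := key_ineq n h hln35 hh14 hn1
  obtain ⟨S, hScard, hSsep⟩ := greedy h n hkey n le_rfl
  refine ⟨2*h, ⟨h, two_mul h⟩, ?_, ?_, ?_⟩
  · push_cast
    linarith
  · have h72 : (72:ℝ) * Real.log n / ε = 72 * L := by rw [hL]; ring
    push_cast
    rw [h72]
    linarith
  · refine ⟨fun i ℓ => decide (ℓ ∈ S i), ?_, ?_⟩
    · intro i
      have heq : (Finset.univ.filter fun ℓ => (decide (ℓ ∈ S i)) = true) = S i := by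
        ext ℓ; simp
      rw [heq, hScard i]
      omega
    · intro i j hij
      have hfilter : (Finset.univ.filter fun ℓ =>
          (decide (ℓ ∈ S i)) = true ∧ (decide (ℓ ∈ S j)) = false) = S i \ S j := by
        ext ℓ
        simp [Finset.mem_sdiff]
      rw [hfilter]
      have hsep := hSsep i j hij
      have hinterle : (S i ∩ S j).card ≤ h :=
        le_trans (Finset.card_le_card Finset.inter_subset_left) (le_of_eq (hScard i))
      have hcard : (S i \ S j).card = h - (S i ∩ S j).card := by
        have := Finset.card_sdiff_add_card_inter (S i) (S j)
        rw [hScard i] at this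
        omega
      rw [hcard]
      have hc3 : (3:ℝ) * ((S i ∩ S j).card : ℝ) ≤ 2*(h:ℝ) := by exact_mod_cast hsep
      rw [Nat.cast_sub hinterle]
      push_cast
      linarith
end

section
/- Symmetrization lower bound: Suppose D = D_1 × ... × D_n is a product distribution whose single-item marginals are pairwise at distance at least c apart (δ(D_i, D_j) ≥ c for all i ≠ j, where δ is a metric on single-item distributions). Then for any product distribution D' that is symmetric with respect to an item-permutation group Σ of partition size s (so D' has at most s distinct marginals), the total marginal-matching error Σ_i δ(D_i, D'_i) is at least (n - s)·c/2. -/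
/-!
`D'` is constant on each part, so by the triangle inequality at most one item of a part is
`c / 2`-close to it; the other `#T - 1` items of a part `T` each cost at least `c / 2`, and
these counts add up to `n - s` over the partition.
-/

open Finset

lemma card_filter_dist_lt_half_le_one {ι α : Type*} [PseudoMetricSpace α] {S : Finset ι}
    {f g : ι → α} {c : ℝ} (hsep : ∀ i ∈ S, ∀ j ∈ S, i ≠ j → c ≤ dist (f i) (f j))
    (hg : ∀ i ∈ S, ∀ j ∈ S, g i = g j) :
    #{i ∈ S | dist (f i) (g i) < c / 2} ≤ 1 := by
  refine card_le_one.2 fun i hi j hj ↦ ?_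
  rw [mem_filter] at hi hj
  by_contra hij
  have hclose : dist (f i) (f j) < c :=
    calc dist (f i) (f j) ≤ dist (f i) (g i) + dist (g j) (f j) := by
          rw [hg i hi.1 j hj.1]; exact dist_triangle _ _ _
      _ < c / 2 + c / 2 := by rw [dist_comm (g j)]; exact add_lt_add hi.2 hj.2
      _ = c := add_halves c
  exact (hclose.trans_le' (hsep i hi.1 j hj.1 hij)).false

lemma sub_one_mul_half_le_sum_dist {ι α : Type*} [PseudoMetricSpace α] {S : Finset ι}
    {f g : ι → α} {c : ℝ} (hc : 0 ≤ c)
    (hsep : ∀ i ∈ S, ∀ j ∈ S, i ≠ j → c ≤ dist (f i) (f j))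
    (hg : ∀ i ∈ S, ∀ j ∈ S, g i = g j) :
    ((#S : ℝ) - 1) * c / 2 ≤ ∑ i ∈ S, dist (f i) (g i) := by
  set far := {i ∈ S | ¬dist (f i) (g i) < c / 2}
  have hfar : (#S : ℝ) - 1 ≤ #far := by
    have hsplit := card_filter_add_card_filter_not (s := S)
      (fun i ↦ dist (f i) (g i) < c / 2)
    have hnear : (#{i ∈ S | dist (f i) (g i) < c / 2} : ℝ) ≤ 1 := by
      exact_mod_cast card_filter_dist_lt_half_le_one hsep hg
    rw [← hsplit]; push_cast; linarith
  have hfar_sum : #far • (c / 2) ≤ ∑ i ∈ far, dist (f i) (g i) :=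
    card_nsmul_le_sum _ _ _ fun i hi ↦ not_lt.1 (mem_filter.1 hi).2
  calc ((#S : ℝ) - 1) * c / 2 = ((#S : ℝ) - 1) * (c / 2) := mul_div_assoc _ _ _
    _ ≤ #far * (c / 2) := by gcongr
    _ ≤ ∑ i ∈ far, dist (f i) (g i) := by rwa [← nsmul_eq_mul]
    _ ≤ ∑ i ∈ S, dist (f i) (g i) :=
      sum_le_sum_of_subset_of_nonneg (filter_subset _ _) fun _ _ _ ↦ dist_nonneg

/-- Symmetrization lower bound: if the marginals `D i` are pairwise at distance at
least `c`, and `D'` is constant on each part of a partition of `[n]` into `s` parts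
(i.e. symmetric with respect to an item-permutation group of partition size `s`),
then `Σ_i dist (D i) (D' i) ≥ (n - s)·c/2`. -/
theorem stmt13 {α : Type*} [MetricSpace α] (n s : ℕ)
    (P : Fin s → Finset (Fin n))
    (hdisj : ∀ x y, x ≠ y → Disjoint (P x) (P y))
    (hcov : Finset.univ.biUnion P = Finset.univ)
    (D D' : Fin n → α) (c : ℝ) (hc : 0 ≤ c)
    (hsep : ∀ i j, i ≠ j → c ≤ dist (D i) (D j))
    (hsym : ∀ x, ∀ i ∈ P x, ∀ j ∈ P x, D' i = D' j) :
    ((n : ℝ) - s) * c / 2 ≤ ∑ i, dist (D i) (D' i) := by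
  have hpd : Set.PairwiseDisjoint ↑(univ : Finset (Fin s)) P := fun x _ y _ hxy ↦ hdisj x y hxy
  have hcard : ∑ x, (#(P x) : ℝ) = n := by
    rw [← Nat.cast_sum, ← card_biUnion hpd, hcov, card_univ, Fintype.card_fin]
  calc ((n : ℝ) - s) * c / 2 = ∑ x, ((#(P x) : ℝ) - 1) * c / 2 := by
        simp only [← sum_div, ← sum_mul, sum_sub_distrib, hcard, sum_const, card_univ,
          Fintype.card_fin, nsmul_eq_mul, mul_one]
    _ ≤ ∑ x, ∑ i ∈ P x, dist (D i) (D' i) := sum_le_sum fun x _ ↦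
        sub_one_mul_half_le_sum_dist hc (fun i _ j _ ↦ hsep i j) (hsym x)
    _ = ∑ i, dist (D i) (D' i) := by rw [← sum_biUnion hpd, hcov]
end

section
/- Selling a bundle against an independent threshold: Let D be subadditive over independent items with partition S, S̄ of [n], and let Y be the event that v(S) ≥ v(S̄) (expectations of the restricted valuations). Then Rev(D_S) ≥ Val(D_{S̄} · 1(v ∈ Y)); that is, the optimal revenue from selling only items in S is at least the expected value of v(S̄) restricted to the event Y. -/
open scoped BigOperators
open scoped ENNReal NNReal

/-- The optimal revenue `Rev(D)`. -/
noncomputable def Rev {n : ℕ} (D : PMF (Val n)) : ℝ :=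
  sSup {r | ∃ M c, IsMenu M ∧ IsOptChoice M c ∧ r = RevM c D}

/- ### Auxiliary lemmas -/

lemma pmf_ne_top' {δ : Type*} (p : PMF δ) (d : δ) : p d ≠ ⊤ :=
  ne_top_of_le_ne_top ENNReal.one_ne_top (p.coe_le_one d)

open Classical in
lemma tsum_pmf_map_mul' {β γ : Type*} (p : PMF β) (φ : β → γ) (G : γ → ℝ≥0∞) :
    ∑' v, (p.map φ) v * G v = ∑' b, p b * G (φ b) := by
  have h1 : ∀ v, (p.map φ) v * G v = ∑' b, (if v = φ b then p b * G (φ b) else 0) := by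
    intro v
    rw [PMF.map_apply, ← ENNReal.tsum_mul_right]
    congr 1 with b
    split
    · next h => rw [h]
    · simp
  simp_rw [h1]
  rw [ENNReal.tsum_comm]
  congr 1 with b
  exact tsum_ite_eq (φ b) _

lemma tsum_pmf_bind_mul' {α γ : Type*} (p : PMF α) (f : α → PMF γ) (G : γ → ℝ≥0∞) :
    ∑' v, (p.bind f) v * G v = ∑' a, p a * ∑' v, (f a) v * G v := by
  have h1 : ∀ v, (p.bind f) v * G v = ∑' a, p a * ((f a) v * G v) := by
    intro v
    rw [PMF.bind_apply, ← ENNReal.tsum_mul_right]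
    simp_rw [mul_assoc]
  simp_rw [h1]
  rw [ENNReal.tsum_comm]
  congr 1 with a
  exact ENNReal.tsum_mul_left

/-- Expectation of a nonnegative function under a two-stage (bind/map) PMF with
finite supports, as a finite double sum. -/
lemma key_formula' {α β γ : Type*} (PA : PMF α) (PB : PMF β)
    (hA : PA.support.Finite) (hB : PB.support.Finite)
    (φ : α → β → γ) (F : γ → ℝ) (hF : ∀ v, 0 ≤ F v) :
    ∑' v, ((PA.bind fun a => PB.map (φ a)) v).toReal * F v
      = ∑ a ∈ hA.toFinset, (PA a).toReal *
          ∑ b ∈ hB.toFinset, (PB b).toReal * F (φ a b) := by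
  set G : γ → ℝ≥0∞ := fun v => ENNReal.ofReal (F v) with hGdef
  have hG : ∀ v, G v ≠ ⊤ := fun v => ENNReal.ofReal_ne_top
  have hinner : ∀ a, (∑' b, PB b * G (φ a b)) = ∑ b ∈ hB.toFinset, PB b * G (φ a b) := by
    intro a
    refine tsum_eq_sum ?_
    intro b hb
    have : PB b = 0 := by
      by_contra h
      exact hb (hB.mem_toFinset.mpr h)
    simp [this]
  have hinner_ne : ∀ a, (∑ b ∈ hB.toFinset, PB b * G (φ a b)) ≠ ⊤ := by
    intro a
    refine (ENNReal.sum_lt_top.mpr ?_).ne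
    intro b _
    exact (ENNReal.mul_lt_top (pmf_ne_top' PB b).lt_top (hG _).lt_top)
  have step1 : ∑' v, ((PA.bind fun a => PB.map (φ a)) v).toReal * F v
      = (∑' v, (PA.bind fun a => PB.map (φ a)) v * G v).toReal := by
    rw [ENNReal.tsum_toReal_eq (fun v => ENNReal.mul_ne_top (pmf_ne_top' _ v) (hG v))]
    congr 1 with v
    rw [ENNReal.toReal_mul, ENNReal.toReal_ofReal (hF v)]
  rw [step1, tsum_pmf_bind_mul']
  have step2 : ∑' a, PA a * ∑' v, (PB.map (φ a)) v * G v
      = ∑ a ∈ hA.toFinset, PA a * ∑ b ∈ hB.toFinset, PB b * G (φ a b) := by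
    have h2 : ∀ a, (∑' v, (PB.map (φ a)) v * G v) = ∑ b ∈ hB.toFinset, PB b * G (φ a b) := by
      intro a
      rw [tsum_pmf_map_mul']
      exact hinner a
    simp_rw [h2]
    refine tsum_eq_sum ?_
    intro a ha
    have : PA a = 0 := by
      by_contra h
      exact ha (hA.mem_toFinset.mpr h)
    simp [this]
  rw [step2, ENNReal.toReal_sum]
  · refine Finset.sum_congr rfl ?_
    intro a _
    rw [ENNReal.toReal_mul, ENNReal.toReal_sum]
    · congr 1
      refine Finset.sum_congr rfl ?_
      intro b _
      rw [ENNReal.toReal_mul, ENNReal.toReal_ofReal (hF _)]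
    · intro b _
      exact ENNReal.mul_ne_top (pmf_ne_top' _ b) (hG _)
  · intro a _
    exact ENNReal.mul_ne_top (pmf_ne_top' _ a) (hinner_ne a)

lemma vEval_pure' {n : ℕ} (v : Val n) (X : Finset (Fin n)) :
    vEval v (PMF.pure X) = v X := by
  classical
  rw [vEval, tsum_fintype]
  have h : ∀ Y : Finset (Fin n),
      ((PMF.pure X : RandAlloc n) Y).toReal * v Y = if Y = X then v Y else 0 := by
    intro Y
    rw [PMF.pure_apply]
    split_ifs with h <;> simp
  simp_rw [h]
  simp

lemma vEval_le' {n : ℕ} (v : Val n) (A : RandAlloc n) :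
    vEval v A ≤ ∑ X : Finset (Fin n), |v X| := by
  rw [vEval, tsum_fintype]
  refine Finset.sum_le_sum ?_
  intro X _
  have h1 : (A X).toReal ≤ 1 := by
    have := ENNReal.toReal_mono ENNReal.one_ne_top (A.coe_le_one X)
    simpa using this
  calc (A X).toReal * v X ≤ (A X).toReal * |v X| :=
        mul_le_mul_of_nonneg_left (le_abs_self _) ENNReal.toReal_nonneg
    _ ≤ 1 * |v X| := mul_le_mul_of_nonneg_right h1 (abs_nonneg _)
    _ = |v X| := one_mul _

lemma pmf_sum_toReal_one' {β : Type*} (PB : PMF β) (hB : PB.support.Finite) :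
    ∑ b ∈ hB.toFinset, (PB b).toReal = 1 := by
  have h1 : (∑ b ∈ hB.toFinset, PB b) = 1 := by
    rw [← tsum_eq_sum (L := SummationFilter.unconditional _) (s := hB.toFinset) (f := fun b => PB b)]
    · exact PB.tsum_coe
    · intro b hb
      by_contra h
      exact hb (hB.mem_toFinset.mpr h)
  have h2 := congrArg ENNReal.toReal h1
  rw [ENNReal.toReal_sum (fun b _ => pmf_ne_top' _ _)] at h2
  simpa using h2

/-- Selling a bundle against an independent threshold: for a monotone subadditive
valuation drawn with independent components for `S` (type `a`) and `Sᶜ` (type `b`),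
and `Y` the event `v(Sᶜ) ≤ v(S)`, the optimal revenue from selling only items in `S`
is at least `Val(D_{Sᶜ} · 1(v ∈ Y)) = E[v(Sᶜ) · 1(v(S) ≥ v(Sᶜ))]`. -/
theorem stmt15 {n : ℕ} {A B : Type*} (PA : PMF A) (PB : PMF B)
    (hA : PA.support.Finite) (hB : PB.support.Finite)
    (S : Finset (Fin n)) (vf : A → B → Val n)
    (hS : ∀ a b b', ∀ X : Finset (Fin n), X ⊆ S → vf a b X = vf a b' X)
    (hT : ∀ a a' b, ∀ X : Finset (Fin n), X ⊆ Sᶜ → vf a b X = vf a' b X)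
    (hmono : ∀ a b, ∀ X Y : Finset (Fin n), X ⊆ Y → vf a b X ≤ vf a b Y)
    (hsub : ∀ a b, ∀ X Y : Finset (Fin n), vf a b (X ∪ Y) ≤ vf a b X + vf a b Y)
    (h0 : ∀ a b, vf a b ∅ = 0) :
    (∑' a, (PA a).toReal *
        ∑' b, (PB b).toReal * (if vf a b Sᶜ ≤ vf a b S then vf a b Sᶜ else 0))
      ≤ Rev ((PA.bind fun a => PB.map fun b => vf a b).map fun v X => v (X ∩ S)) := by
  classical
  set φ : A → B → Val n := fun a b => (fun X => vf a b (X ∩ S)) with hφ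
  set D : PMF (Val n) :=
    (PA.bind fun a => PB.map fun b => vf a b).map fun v X => v (X ∩ S) with hD
  have hDeq : D = PA.bind fun a => PB.map (φ a) := by
    rw [hD, PMF.map_bind]
    congr 1
    funext a
    exact PMF.map_comp (vf a) PB _
  set sA := hA.toFinset with hsA
  set sB := hB.toFinset with hsB
  obtain ⟨a₀, _⟩ := PA.support_nonempty
  set g : B → ℝ := fun b => vf a₀ b Sᶜ with hgdef
  have hg0 : ∀ b, 0 ≤ g b := by
    intro b
    have := hmono a₀ b ∅ Sᶜ (Finset.empty_subset _)
    rwa [h0] at this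
  have hgT : ∀ a b, vf a b Sᶜ = g b := fun a b => hT a a₀ b Sᶜ (subset_refl _)
  set t : A → B → ℝ := fun a b => if vf a b Sᶜ ≤ vf a b S then vf a b Sᶜ else 0 with ht
  -- the left-hand side as a finite double sum
  have hLHS : (∑' a, (PA a).toReal *
        ∑' b, (PB b).toReal * (if vf a b Sᶜ ≤ vf a b S then vf a b Sᶜ else 0))
      = ∑ a ∈ sA, (PA a).toReal * ∑ b ∈ sB, (PB b).toReal * t a b := by
    have hin : ∀ a, (∑' b, (PB b).toReal * t a b) = ∑ b ∈ sB, (PB b).toReal * t a b := by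
      intro a
      refine tsum_eq_sum ?_
      intro b hb
      have : PB b = 0 := by
        by_contra h
        exact hb (hB.mem_toFinset.mpr h)
      simp [this]
    have hstep : (∑' a, (PA a).toReal *
          ∑' b, (PB b).toReal * (if vf a b Sᶜ ≤ vf a b S then vf a b Sᶜ else 0))
        = ∑' a, (PA a).toReal * ∑' b, (PB b).toReal * t a b := rfl
    rw [hstep]
    simp_rw [hin]
    refine tsum_eq_sum ?_
    intro a ha
    have : PA a = 0 := by
      by_contra h
      exact ha (hA.mem_toFinset.mpr h)
    simp [this]
  rw [hLHS]
  have hswap : (∑ a ∈ sA, (PA a).toReal * ∑ b ∈ sB, (PB b).toReal * t a b)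
      = ∑ b ∈ sB, (PB b).toReal * ∑ a ∈ sA, (PA a).toReal * t a b := by
    simp_rw [Finset.mul_sum]
    rw [Finset.sum_comm]
    exact Finset.sum_congr rfl fun b _ => Finset.sum_congr rfl fun a _ => by ring
  rw [hswap]
  -- the bound Mv on prices any optimizing buyer will pay
  set Mv : Val n → ℝ := fun v => ∑ X : Finset (Fin n), |v X| with hMv
  have hMv0 : ∀ v, 0 ≤ Mv v := fun v => Finset.sum_nonneg fun X _ => abs_nonneg _
  have price_bound : ∀ (M : Set (RandAlloc n × ℝ)) (c : Val n → RandAlloc n × ℝ),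
      IsMenu M → IsOptChoice M c → ∀ v, (c v).2 ≤ 2 * Mv v := by
    intro M c hM hc v
    have h1 := hc.2 v _ hM.1
    rw [vEval_pure'] at h1
    simp only [sub_zero] at h1
    have h2 : (c v).2 ≤ vEval v (c v).1 - v ∅ := by linarith
    have h3 : vEval v (c v).1 ≤ Mv v := vEval_le' v _
    have h4 : -v ∅ ≤ Mv v := by
      have h5 : |v ∅| ≤ Mv v :=
        Finset.single_le_sum (fun X _ => abs_nonneg (v X)) (Finset.mem_univ ∅)
      have := neg_abs_le (v ∅)
      linarith
    linarith
  -- the revenue set is bounded above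
  have hbdd : BddAbove {r | ∃ M c, IsMenu M ∧ IsOptChoice M c ∧ r = RevM c D} := by
    refine ⟨∑ a ∈ sA, (PA a).toReal * ∑ b ∈ sB, (PB b).toReal * (2 * Mv (φ a b)), ?_⟩
    rintro r ⟨M, c, hM, hc, rfl⟩
    have hF0 : ∀ v, 0 ≤ (c v).2 := fun v => hM.2 _ (hc.1 v)
    have hfor : RevM c D = ∑ a ∈ sA, (PA a).toReal *
        ∑ b ∈ sB, (PB b).toReal * (c (φ a b)).2 := by
      rw [RevM, hDeq]
      exact key_formula' PA PB hA hB φ _ hF0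
    rw [hfor]
    refine Finset.sum_le_sum fun a _ => ?_
    refine mul_le_mul_of_nonneg_left ?_ ENNReal.toReal_nonneg
    refine Finset.sum_le_sum fun b _ => ?_
    exact mul_le_mul_of_nonneg_left (price_bound M c hM hc _) ENNReal.toReal_nonneg
  -- each fixed threshold gives revenue at most Rev D
  have hmain : ∀ b, (∑ a ∈ sA, (PA a).toReal * t a b) ≤ Rev D := by
    intro b
    set w : ℝ := g b with hw
    set M : Set (RandAlloc n × ℝ) := {(PMF.pure ∅, (0:ℝ)), (PMF.pure S, w)} with hM
    set c : Val n → RandAlloc n × ℝ :=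
      fun v => if v ∅ ≤ v S - w then (PMF.pure S, w) else (PMF.pure ∅, 0) with hc
    have hMenu : IsMenu M := by
      constructor
      · exact Set.mem_insert _ _
      · rintro o ho
        rcases ho with h | h
        · rw [h]
        · rw [Set.mem_singleton_iff] at h
          rw [h]
          exact hg0 b
    have hOpt : IsOptChoice M c := by
      constructor
      · intro v
        simp only [hc]
        split_ifs
        · exact Set.mem_insert_iff.mpr (Or.inr rfl)
        · exact Set.mem_insert _ _
      · intro v o ho
        rcases ho with h | h
        · rw [h]
          simp only [vEval_pure', hc]
          split_ifs with hcond
          · simp only [vEval_pure']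
            linarith
          · simp only [vEval_pure']
            linarith
        · rw [Set.mem_singleton_iff] at h
          rw [h]
          simp only [vEval_pure', hc]
          split_ifs with hcond
          · simp only [vEval_pure']
            linarith
          · simp only [vEval_pure']
            linarith
    have hc2 : ∀ a b', (c (φ a b')).2 = if w ≤ vf a b' S then w else 0 := by
      intro a b'
      have he : φ a b' ∅ = 0 := by
        simp only [hφ]
        rw [Finset.empty_inter, h0]
      have hs2 : φ a b' S = vf a b' S := by
        simp only [hφ]
        rw [Finset.inter_self]
      simp only [hc, he, hs2]
      by_cases hcase : w ≤ vf a b' S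
      · rw [if_pos (by linarith), if_pos hcase]
      · rw [if_neg (by intro h; exact hcase (by linarith)), if_neg hcase]
    have hrev : RevM c D = ∑ a ∈ sA, (PA a).toReal * t a b := by
      have hF0 : ∀ v, 0 ≤ (c v).2 := fun v => hMenu.2 _ (hOpt.1 v)
      rw [RevM, hDeq, key_formula' PA PB hA hB φ _ hF0]
      refine Finset.sum_congr rfl fun a _ => ?_
      congr 1
      have hconst : ∀ b' ∈ sB, (PB b').toReal * (c (φ a b')).2
          = (PB b').toReal * t a b := by
        intro b' _
        rw [hc2]
        have h1 : vf a b' S = vf a b S := hS a b' b S (subset_refl _)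
        have h2 : t a b = if w ≤ vf a b S then w else 0 := by
          rw [ht]
          simp only
          rw [hgT a b, ← hw]
        rw [h1, h2]
      rw [Finset.sum_congr rfl hconst, ← Finset.sum_mul, pmf_sum_toReal_one' PB hB, one_mul]
    have hmem : (∑ a ∈ sA, (PA a).toReal * t a b)
        ∈ {r | ∃ M c, IsMenu M ∧ IsOptChoice M c ∧ r = RevM c D} :=
      ⟨M, c, hMenu, hOpt, hrev.symm⟩
    exact le_csSup hbdd hmem
  calc ∑ b ∈ sB, (PB b).toReal * ∑ a ∈ sA, (PA a).toReal * t a b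
      ≤ ∑ b ∈ sB, (PB b).toReal * Rev D :=
        Finset.sum_le_sum fun b _ =>
          mul_le_mul_of_nonneg_left (hmain b) ENNReal.toReal_nonneg
    _ = Rev D := by rw [← Finset.sum_mul, pmf_sum_toReal_one' PB hB, one_mul]
end
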